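/- For the +−+− distribution on ℝ (masses 0.01, 0.49, 0.49, 0.01 on intervals [−7.5,−7], [−7,0], [0,7], [7,7.5] with classes +, −, +, −), the three-threshold classifier predicting + on [−7.5,−7), − on [−7,0), + on [0,7), − on [7,7.5] achieves zero expected error; hence the minimal error over the class of piecewise-constant classifiers with at most three thresholds is 0, strictly smaller than the minimal error 0.02 over single-threshold classifiers. -/

import Mathlib

open MeasureTheory

/-- Density of the +−+− distribution: mass 0.01 on [−7.5,−7) (class +),
0.49 on [−7,0) (class −), 0.49 on [0,7) (class +), 0.01 on [7,7.5] (class −). -/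
noncomputable def pmpmDensity (x : ℝ) : ℝ :=
  if -7.5 ≤ x ∧ x < -7 then 0.02
  else if -7 ≤ x ∧ x < 0 then 0.07
  else if 0 ≤ x ∧ x < 7 then 0.07
  else if 7 ≤ x ∧ x ≤ 7.5 then 0.02
  else 0

/-- True label of the +−+− distribution (`true` = class +). -/
noncomputable def pmpmLabel (x : ℝ) : Bool :=
  if x < -7 then true else if x < 0 then false else if x < 7 then true else false

/-- Single-threshold classifier: label `o` on `(−∞, t)`, `!o` on `[t, ∞)`. -/
noncomputable def thresholdPred (t : ℝ) (o : Bool) (x : ℝ) : Bool :=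
  if x < t then o else !o

/-- Three-threshold (piecewise constant, four-interval) classifier. -/
noncomputable def threeThresholdPred (t₁ t₂ t₃ : ℝ) (l : Fin 4 → Bool) (x : ℝ) : Bool :=
  if x < t₁ then l 0 else if x < t₂ then l 1 else if x < t₃ then l 2 else l 3

/-- Expected zero-one error of a classifier `c` on the +−+− distribution. -/
noncomputable def classifierErr (c : ℝ → Bool) : ℝ :=
  ∫ x, pmpmDensity x * (if c x = pmpmLabel x then 0 else 1)

/-! The pattern `+ − + −` is itself a three-threshold classifier, so its error vanishes.
A single threshold either misclassifies all of one heavy interval `[−7, 0)` or `[0, 7)`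
(mass 0.49 each) or, when it lies in `[−7, 7]` predicting `−` on its left, both light tails
(total mass 0.02); the threshold at `0` with that orientation errs exactly on the tails. -/

open Set

lemma pmpmDensity_nonneg (x : ℝ) : 0 ≤ pmpmDensity x := by
  unfold pmpmDensity; split_ifs <;> norm_num

lemma measurable_pmpmDensity : Measurable pmpmDensity :=
  measurable_const.ite measurableSet_Ico <| measurable_const.ite measurableSet_Ico <|
    measurable_const.ite measurableSet_Ico <|
      measurable_const.ite measurableSet_Icc measurable_const

lemma measurable_pmpmLabel : Measurable pmpmLabel :=
  measurable_const.ite measurableSet_Iio <| measurable_const.ite measurableSet_Iio <|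
    measurable_const.ite measurableSet_Iio measurable_const

lemma measurable_thresholdPred (t : ℝ) (o : Bool) : Measurable (thresholdPred t o) :=
  measurable_const.ite measurableSet_Iio measurable_const

lemma support_pmpmDensity_subset : Function.support pmpmDensity ⊆ Icc (-7.5) 7.5 := by
  intro x hx
  rw [Function.mem_support, pmpmDensity] at hx
  grind

lemma integrable_pmpmDensity : Integrable pmpmDensity := by
  refine (integrableOn_iff_integrable_of_support_subset support_pmpmDensity_subset).1 ?_
  refine Measure.integrableOn_of_bounded (M := 0.07) (by simp [Real.volume_Icc])
    measurable_pmpmDensity.aestronglyMeasurable (ae_of_all _ fun x => ?_)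
  rw [Real.norm_of_nonneg (pmpmDensity_nonneg x)]
  unfold pmpmDensity; split_ifs <;> norm_num

lemma setIntegral_pmpmDensity_inter_Icc (s : Set ℝ) :
    ∫ x in s, pmpmDensity x = ∫ x in s ∩ Icc (-7.5) 7.5, pmpmDensity x := by
  rw [← setIntegral_indicator measurableSet_Icc,
    indicator_eq_self.2 support_pmpmDensity_subset]

lemma classifierErr_nonneg (c : ℝ → Bool) : 0 ≤ classifierErr c :=
  integral_nonneg fun x => mul_nonneg (pmpmDensity_nonneg x) (by split_ifs <;> norm_num)

lemma classifierErr_eq_setIntegral {c : ℝ → Bool} (hc : Measurable c) :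
    classifierErr c = ∫ x in {x | c x ≠ pmpmLabel x}, pmpmDensity x := by
  have hM : MeasurableSet {x | c x ≠ pmpmLabel x} :=
    (measurableSet_eq_fun hc measurable_pmpmLabel).compl
  rw [← integral_indicator hM]
  refine integral_congr_ae (ae_of_all _ fun x => ?_)
  by_cases h : c x = pmpmLabel x <;> simp [h]

lemma setIntegral_le_classifierErr {c : ℝ → Bool} (hc : Measurable c) {s : Set ℝ}
    (hs : ∀ x ∈ s, c x ≠ pmpmLabel x) : ∫ x in s, pmpmDensity x ≤ classifierErr c := by
  rw [classifierErr_eq_setIntegral hc]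
  exact setIntegral_mono_set integrable_pmpmDensity.integrableOn
    (ae_of_all _ pmpmDensity_nonneg) (Filter.Eventually.of_forall hs)

lemma setIntegral_eq_of_eqOn_const {α : Type*} [MeasurableSpace α] {μ : Measure α}
    {f : α → ℝ} {s : Set α} {k : ℝ} (hs : MeasurableSet s) (h : EqOn f (fun _ => k) s) :
    ∫ x in s, f x ∂μ = μ.real s * k := by
  rw [setIntegral_congr_fun hs h, setIntegral_const, smul_eq_mul]

lemma setIntegral_pmpmDensity_Ico_neg_seven_zero :
    ∫ x in Ico (-7) 0, pmpmDensity x = 0.49 := by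
  rw [setIntegral_eq_of_eqOn_const measurableSet_Ico (k := 0.07),
    Real.volume_real_Ico_of_le (by norm_num)]
  · norm_num
  · intro x hx
    grind [pmpmDensity]

lemma setIntegral_pmpmDensity_Ico_zero_seven : ∫ x in Ico 0 7, pmpmDensity x = 0.49 := by
  rw [setIntegral_eq_of_eqOn_const measurableSet_Ico (k := 0.07),
    Real.volume_real_Ico_of_le (by norm_num)]
  · norm_num
  · intro x hx
    grind [pmpmDensity]

def pmpmTails : Set ℝ := Ico (-7.5) (-7) ∪ Icc 7 7.5

lemma setIntegral_pmpmDensity_pmpmTails : ∫ x in pmpmTails, pmpmDensity x = 0.02 := by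
  have hdisj : Disjoint (Ico (-7.5 : ℝ) (-7)) (Icc 7 7.5) :=
    disjoint_left.2 fun x h₁ h₂ => by linarith [h₁.2, h₂.1]
  rw [pmpmTails, setIntegral_union hdisj measurableSet_Icc integrable_pmpmDensity.integrableOn
      integrable_pmpmDensity.integrableOn,
    setIntegral_eq_of_eqOn_const measurableSet_Ico (k := 0.02),
    setIntegral_eq_of_eqOn_const measurableSet_Icc (k := 0.02),
    Real.volume_real_Ico_of_le (by norm_num), Real.volume_real_Icc_of_le (by norm_num)]
  · norm_num
  · intro x hx
    grind [pmpmDensity]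
  · intro x hx
    grind [pmpmDensity]

lemma two_hundredths_le_classifierErr {c : ℝ → Bool} (hc : Measurable c)
    (h : (∀ x ∈ Ico (-7) 0, c x ≠ pmpmLabel x) ∨ (∀ x ∈ Ico 0 7, c x ≠ pmpmLabel x) ∨
      ∀ x ∈ pmpmTails, c x ≠ pmpmLabel x) :
    0.02 ≤ classifierErr c := by
  rcases h with h | h | h
  · linarith [setIntegral_le_classifierErr hc h, setIntegral_pmpmDensity_Ico_neg_seven_zero]
  · linarith [setIntegral_le_classifierErr hc h, setIntegral_pmpmDensity_Ico_zero_seven]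
  · linarith [setIntegral_le_classifierErr hc h, setIntegral_pmpmDensity_pmpmTails]

lemma thresholdPred_misclassifies (t : ℝ) (o : Bool) :
    (∀ x ∈ Ico (-7) 0, thresholdPred t o x ≠ pmpmLabel x) ∨
      (∀ x ∈ Ico 0 7, thresholdPred t o x ≠ pmpmLabel x) ∨
      ∀ x ∈ pmpmTails, thresholdPred t o x ≠ pmpmLabel x := by
  cases o
  · rcases lt_or_ge t (-7) with ht | ht
    · left; intro x hx; grind [thresholdPred, pmpmLabel]
    rcases le_or_gt t 7 with ht' | ht'
    · right; right
      intro x hx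
      grind [thresholdPred, pmpmLabel, pmpmTails]
    · right; left; intro x hx; grind [thresholdPred, pmpmLabel]
  · rcases le_or_gt t 0 with ht | ht
    · right; left; intro x hx; grind [thresholdPred, pmpmLabel]
    · left; intro x hx; grind [thresholdPred, pmpmLabel]

lemma classifierErr_thresholdPred_zero_false :
    classifierErr (thresholdPred 0 false) = 0.02 := by
  have hmistakes :
      {x | thresholdPred 0 false x ≠ pmpmLabel x} ∩ Icc (-7.5) 7.5 = pmpmTails := by
    ext x
    grind [thresholdPred, pmpmLabel, pmpmTails]
  rw [classifierErr_eq_setIntegral (measurable_thresholdPred 0 false),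
    setIntegral_pmpmDensity_inter_Icc, hmistakes, setIntegral_pmpmDensity_pmpmTails]

lemma threeThresholdPred_pmpm :
    threeThresholdPred (-7) 0 7 ![true, false, true, false] = pmpmLabel := by
  funext x
  simp only [threeThresholdPred, pmpmLabel]
  split_ifs <;> rfl

lemma classifierErr_pmpmLabel : classifierErr pmpmLabel = 0 := by
  simp [classifierErr]

/-- The three-threshold classifier matching the +−+− pattern achieves zero
error; hence the minimal error over three-threshold classifiers is `0`, which
is strictly smaller than the minimal error `0.02` over single-threshold
classifiers. -/
theorem pmpm_three_thresholds_beat_one :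
    classifierErr (threeThresholdPred (-7) 0 7 ![true, false, true, false]) = 0 ∧
    sInf {e : ℝ | ∃ t₁ t₂ t₃ l, e = classifierErr (threeThresholdPred t₁ t₂ t₃ l)} = 0 ∧
    IsLeast {e : ℝ | ∃ t o, e = classifierErr (thresholdPred t o)} 0.02 ∧
    (0 : ℝ) < 0.02 := by
  have hzero := threeThresholdPred_pmpm ▸ classifierErr_pmpmLabel
  refine ⟨hzero, IsLeast.csInf_eq ⟨⟨_, _, _, _, hzero.symm⟩, ?_⟩,
    ⟨⟨0, false, classifierErr_thresholdPred_zero_false.symm⟩, ?_⟩, by norm_num⟩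
  · rintro e ⟨t₁, t₂, t₃, l, rfl⟩
    exact classifierErr_nonneg _
  · rintro e ⟨t, o, rfl⟩
    exact two_hundredths_le_classifierErr (measurable_thresholdPred t o)
      (thresholdPred_misclassifies t o)
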